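/- A nice t-boundaried embedding of genus ĝ has at most 48t + 24ĝ flags. Equivalently, its number of edges is at most 12t + 6ĝ. -/

import Mathlib

def FPF {F : Type*} (π : Equiv.Perm F) : Prop := π * π = 1 ∧ ∀ x, π x ≠ x

def orbSet {F : Type*} (S : Set (Equiv.Perm F)) (x : F) : Set F :=
  MulAction.orbit (Subgroup.closure S) x

noncomputable def orbCount {F : Type*} (S : Set (Equiv.Perm F)) : ℕ :=
  Nat.card (MulAction.orbitRel.Quotient (Subgroup.closure S) F)

noncomputable def genus {F : Type*} (θ σ' φ' : Equiv.Perm F) : ℤ :=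
  (orbCount {θ, σ'} : ℤ) - orbCount {σ', φ'} - orbCount {θ, φ'} + 2 * orbCount {θ, σ', φ'}

def IsGraphEmb {F : Type*} (θ σ' φ' : Equiv.Perm F) : Prop :=
  FPF θ ∧ FPF σ' ∧ FPF φ' ∧ ∀ x : F, Nat.card (orbSet {θ, σ'} x) = 4

def IsEdgeDeletion {F : Type*} (σ' φ' : Equiv.Perm F) (e : Set F)
    (θ₀ σ₀ φ₀ : Equiv.Perm {f : F // f ∉ e}) (θ : Equiv.Perm F) : Prop :=
  (∀ a : {f : F // f ∉ e}, (θ₀ a : F) = θ a ∧ (σ₀ a : F) = σ' a) ∧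
  (∀ a : {f : F // f ∉ e}, ∃ m : ℕ,
     ((φ' * σ') ^ m) (φ' a) ∉ e ∧ (∀ j < m, ((φ' * σ') ^ j) (φ' a) ∈ e) ∧
     (φ₀ a : F) = ((φ' * σ') ^ m) (φ' a))

/-- `L` is a proper vertex labelling: constant on vertex orbits, and injective
across distinct vertex orbits. -/
def IsLabelling {F : Type*} {t : ℕ} (σ' φ' : Equiv.Perm F) (L : F → Option (Fin t)) : Prop :=
  (∀ f : F, ∀ x ∈ orbSet {σ', φ'} f, L x = L f) ∧
  (∀ f f' : F, ∀ ℓ : Fin t, L f = some ℓ → L f' = some ℓ → f' ∈ orbSet {σ', φ'} f)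

/-- Niceness of a `t`-boundaried embedding: every unlabelled vertex with fewer than
6 flags is isolated, and every edge incident with two faces has, on each incident
face, a labelled flag away from the edge's neighbourhood. -/
def IsNice {F : Type*} {t : ℕ} (θ σ' φ' : Equiv.Perm F) (L : F → Option (Fin t)) : Prop :=
  (∀ f : F, L f = none → Nat.card (orbSet {σ', φ'} f) < 6 →
    orbSet {σ', φ'} f = orbSet {θ, σ', φ'} f) ∧
  (∀ y : F, Nat.card ((fun f => orbSet {θ, φ'} f) '' orbSet {θ, σ'} y) = 2 →
    ∃ z ∈ orbSet {θ, φ'} y, z ∉ ({y, θ y, φ' y, φ' (θ y)} : Set F) ∧ L z ≠ none)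

/-!
Write `V, E, Φ, C` for the numbers of vertices (`⟨σ, φ⟩`-orbits), edges (`⟨θ, σ⟩`-orbits),
faces (`⟨θ, φ⟩`-orbits) and components, and `U`, `Λ` for the sets of unlabelled and labelled
flags. As every edge has four flags, `|F| = 4E`, and the claim becomes
`24 V + 24 Φ ≤ 48 t + 48 C + 5 |F|`. We charge vertices and faces separately.

A vertex is labelled (at most `t` of these), or isolated by niceness (1), or has at least six
flags, all unlabelled; hence `6 V ≤ 6 t + 6 C + |U|`.

A face is a whole component if `σ` never leaves it. Otherwise it contains a flag `x` whose edge
meets a second face, and niceness (2) gives a labelled flag away from `x`, so the face has at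
least five, hence six, flags (faces are `θ`-invariant) and at least two labelled flags (they come
in `φ`-pairs). A face with exactly two labelled flags, or a hexagonal face with four, contains a
whole labelled vertex, and at most `t` faces do. Every other face `f` satisfies
`|f| + 4 |f ∩ Λ| ≥ 24`, so `24 Φ ≤ 24 t + 24 C + |F| + 4 |Λ|`.
-/

open Finset

lemma FPF.involutive {F : Type*} {π : Equiv.Perm F} (h : FPF π) : Function.Involutive π :=
  fun x => by simpa using DFunLike.congr_fun h.1 x

section Development

variable {F : Type*}

lemma mem_orbSet_self (S : Set (Equiv.Perm F)) (x : F) : x ∈ orbSet S x :=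
  MulAction.mem_orbit_self x

lemma orbSet_eq_of_mem {S : Set (Equiv.Perm F)} {x y : F} (h : x ∈ orbSet S y) :
    orbSet S x = orbSet S y :=
  MulAction.orbit_eq_iff.mpr h

lemma apply_mem_orbSet {S : Set (Equiv.Perm F)} {π : Equiv.Perm F} (hπ : π ∈ S) {x y : F}
    (h : y ∈ orbSet S x) : π y ∈ orbSet S x := by
  rw [← orbSet_eq_of_mem h]
  exact MulAction.mem_orbit y (⟨π, Subgroup.subset_closure hπ⟩ : Subgroup.closure S)

lemma orbSet_mono {S S' : Set (Equiv.Perm F)} (h : S ⊆ S') (x : F) :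
    orbSet S x ⊆ orbSet S' x := by
  rintro _ ⟨g, rfl⟩
  exact ⟨⟨g, Subgroup.closure_mono h g.2⟩, rfl⟩

open Pointwise in
lemma orbSet_subset_of_forall_mem [Finite F] {S : Set (Equiv.Perm F)} {T : Set F} {x : F}
    (hx : x ∈ T) (hT : ∀ π ∈ S, ∀ z ∈ T, π z ∈ T) : orbSet S x ⊆ T := by
  have hstab : Subgroup.closure S ≤ MulAction.stabilizer (Equiv.Perm F) T := by
    refine (Subgroup.closure_le _).mpr fun π hπ => ?_
    -- `π • T ⊆ T` forces `π • T = T` since `T` is finite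
    refine Set.eq_of_subset_of_ncard_le ?_ (Set.ncard_smul_set π T).ge (Set.toFinite _)
    rintro _ ⟨z, hz, rfl⟩
    exact hT π hπ z hz
  rintro _ ⟨g, rfl⟩
  rw [← MulAction.mem_stabilizer_iff.mp (hstab g.2)]
  exact Set.smul_mem_smul_set hx

lemma orbSet_insert_eq_of_forall_mem [Finite F] {S : Set (Equiv.Perm F)} {π : Equiv.Perm F}
    {x : F} (h : ∀ w ∈ orbSet S x, π w ∈ orbSet S x) : orbSet (insert π S) x = orbSet S x := by
  refine (orbSet_subset_of_forall_mem (mem_orbSet_self S x) ?_).antisymm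
    (orbSet_mono (Set.subset_insert π S) x)
  rintro ρ (rfl | hρ) w hw
  exacts [h w hw, apply_mem_orbSet hρ hw]

lemma ncard_pair_le_two (a b : F) : ({a, b} : Set F).ncard ≤ 2 := by
  classical
  rw [show ({a, b} : Set F) = ↑({a, b} : Finset F) by simp, Set.ncard_coe_finset]
  exact Finset.card_le_two

lemma ncard_quad_le_four (a b c d : F) : ({a, b, c, d} : Set F).ncard ≤ 4 := by
  classical
  rw [show ({a, b, c, d} : Set F) = ↑({a, b, c, d} : Finset F) by simp, Set.ncard_coe_finset]
  exact Finset.card_le_four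

lemma mul_card_le_add_sum {α : Type*} (A : Finset α) (P Q : α → Prop) [DecidablePred P]
    [DecidablePred Q] (f : α → ℕ) (c : ℕ) (h : ∀ a ∈ A, ¬ P a → ¬ Q a → c ≤ f a) :
    c * #A ≤ c * #(A.filter P) + c * #(A.filter Q) + ∑ a ∈ A, f a := by
  rw [card_filter, card_filter, card_eq_sum_ones, mul_sum, mul_sum, mul_sum, ← sum_add_distrib,
    ← sum_add_distrib]
  refine sum_le_sum fun a ha => ?_
  by_cases hP : P a
  · simp [hP, add_assoc]
  by_cases hQ : Q a
  · simp [hP, hQ]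
  · simpa [hP, hQ] using h a ha hP hQ

section Involutions

variable {π ρ : Equiv.Perm F}

lemma orbSet_pair_subset_of_apply_eq [Finite F] (hπ : Function.Involutive π)
    (hρ : Function.Involutive ρ) {x : F} (h : π x = ρ x) : orbSet {π, ρ} x ⊆ {x, π x} := by
  refine orbSet_subset_of_forall_mem (by simp) ?_
  simp only [Set.mem_insert_iff, Set.mem_singleton_iff, forall_eq_or_imp, forall_eq]
  grind [Function.Involutive]

lemma orbSet_pair_subset_of_comm [Finite F] (hπ : Function.Involutive π)
    (hρ : Function.Involutive ρ) {x : F} (h : ρ (π x) = π (ρ x)) :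
    orbSet {π, ρ} x ⊆ {x, π x, ρ x, ρ (π x)} := by
  refine orbSet_subset_of_forall_mem (by simp) ?_
  simp only [Set.mem_insert_iff, Set.mem_singleton_iff, forall_eq_or_imp, forall_eq]
  grind [Function.Involutive]

lemma ncard_quad_eq_four (hπ : FPF π) (hρ : FPF ρ) {x : F} (h : π x ≠ ρ x) :
    ({x, π x, ρ x, ρ (π x)} : Set F).ncard = 4 := by
  have hπi := hπ.involutive
  have hρi := hρ.involutive
  have hπx := hπ.2
  have hρx := hρ.2
  rw [Set.ncard_insert_of_notMem, Set.ncard_insert_of_notMem, Set.ncard_pair] <;>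
    (try simp only [Set.mem_insert_iff, Set.mem_singleton_iff, not_or]) <;>
    grind [Function.Involutive]

lemma five_le_ncard_orbSet [Finite F] (hπ : FPF π) (hρ : FPF ρ) {x z : F}
    (hz : z ∈ orbSet {π, ρ} x) (hzx : z ∉ ({x, π x, ρ x, ρ (π x)} : Set F)) :
    5 ≤ (orbSet {π, ρ} x).ncard := by
  by_cases h : π x = ρ x
  · exact absurd (orbSet_pair_subset_of_apply_eq hπ.involutive hρ.involutive h hz)
      (fun hz' => hzx (by rcases hz' with rfl | rfl <;> simp))
  · have hsub : insert z ({x, π x, ρ x, ρ (π x)} : Set F) ⊆ orbSet {π, ρ} x := by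
      have hx := mem_orbSet_self {π, ρ} x
      have hπS : π ∈ ({π, ρ} : Set (Equiv.Perm F)) := by simp
      have hρS : ρ ∈ ({π, ρ} : Set (Equiv.Perm F)) := by simp
      rintro w (rfl | rfl | rfl | rfl | rfl)
      exacts [hz, hx, apply_mem_orbSet hπS hx, apply_mem_orbSet hρS hx,
        apply_mem_orbSet hρS (apply_mem_orbSet hπS hx)]
    calc 5 = (insert z ({x, π x, ρ x, ρ (π x)} : Set F)).ncard := by
          rw [Set.ncard_insert_of_notMem hzx, ncard_quad_eq_four hπ hρ h]
      _ ≤ _ := Set.ncard_le_ncard hsub (Set.toFinite _)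

lemma even_ncard_of_forall_mem [Finite F] (hπ : FPF π) {s : Set F} (hs : ∀ x ∈ s, π x ∈ s) :
    Even s.ncard := by
  classical
  -- the factors cancel in `π`-pairs
  have hprod : ∏ _x ∈ s.toFinite.toFinset, (-1 : ℤ) = 1 :=
    Finset.prod_involution (fun x _ => π x) (fun _ _ => by norm_num)
      (fun x _ _ => hπ.2 x) (fun x hx => by simpa using hs x (by simpa using hx))
      (fun x _ => hπ.involutive x)
  rwa [Finset.prod_const, neg_one_pow_eq_one_iff_even (by norm_num),
    ← Set.ncard_eq_toFinset_card] at hprod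

lemma orbSet_eq_hexagon [Finite F] (hπ : FPF π) (hρ : FPF ρ) {u : F}
    (ha : (orbSet {π, ρ} u).ncard = 6) :
    orbSet {π, ρ} u = {u, ρ u, π u, ρ (π u), π (ρ (π u)), ρ (π (ρ (π u)))} ∧
      π (ρ (π (ρ (π u)))) = ρ u := by
  have hπi := hπ.involutive
  have hρi := hρ.involutive
  have hπx := hπ.2
  have hρx := hρ.2
  have hA : π u ≠ ρ u := fun he => by
    have := (Set.ncard_le_ncard (orbSet_pair_subset_of_apply_eq hπi hρi he)
      (Set.toFinite _)).trans (ncard_pair_le_two _ _)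
    omega
  have hB : ρ (π u) ≠ π (ρ u) := fun he => by
    have := (Set.ncard_le_ncard (orbSet_pair_subset_of_comm hπi hρi he)
      (Set.toFinite _)).trans (ncard_quad_le_four _ _ _ _)
    omega
  have hu := mem_orbSet_self {π, ρ} u
  have hπO : ∀ x ∈ orbSet {π, ρ} u, π x ∈ orbSet {π, ρ} u :=
    fun x hx => apply_mem_orbSet (by simp) hx
  have hρO : ∀ x ∈ orbSet {π, ρ} u, ρ x ∈ orbSet {π, ρ} u :=
    fun x hx => apply_mem_orbSet (by simp) hx
  have hO6 : orbSet {π, ρ} u = {u, ρ u, π u, ρ (π u), π (ρ (π u)), ρ (π (ρ (π u)))} := by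
    refine (Set.eq_of_subset_of_ncard_le ?_ ?_ (Set.toFinite _)).symm
    · rintro w (rfl | rfl | rfl | rfl | rfl | rfl) <;> grind
    · rw [ha, Set.ncard_insert_of_notMem, Set.ncard_insert_of_notMem,
        Set.ncard_insert_of_notMem, Set.ncard_insert_of_notMem, Set.ncard_pair] <;>
        (try simp only [Set.mem_insert_iff, Set.mem_singleton_iff, not_or]) <;>
        grind [Function.Involutive]
  refine ⟨hO6, ?_⟩
  have hmem : π (ρ (π (ρ (π u)))) ∈ orbSet {π, ρ} u := by grind
  rw [hO6] at hmem
  simp only [Set.mem_insert_iff, Set.mem_singleton_iff] at hmem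
  grind [Function.Involutive]

end Involutions

section Embedding

variable {t : ℕ} {θ σ φ : Equiv.Perm F} {L : F → Option (Fin t)}

lemma IsLabelling.label_apply_left (hL : IsLabelling σ φ L) (x : F) : L (σ x) = L x :=
  hL.1 x _ (apply_mem_orbSet (by simp) (mem_orbSet_self _ _))

lemma IsLabelling.label_apply_right (hL : IsLabelling σ φ L) (x : F) : L (φ x) = L x :=
  hL.1 x _ (apply_mem_orbSet (by simp) (mem_orbSet_self _ _))

lemma IsGraphEmb.theta_ne_sigma [Finite F] (h : IsGraphEmb θ σ φ) (y : F) :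
    θ y ≠ σ y := fun hy => by
  have h2 := (Set.ncard_le_ncard (orbSet_pair_subset_of_apply_eq h.1.involutive
    h.2.1.involutive hy) (Set.toFinite _)).trans (ncard_pair_le_two _ _)
  rw [← Nat.card_coe_set_eq, h.2.2.2 y] at h2
  omega

lemma IsGraphEmb.edge_eq [Finite F] (h : IsGraphEmb θ σ φ) (y : F) :
    orbSet {θ, σ} y = {y, θ y, σ y, σ (θ y)} := by
  have hy := mem_orbSet_self {θ, σ} y
  have hθS : θ ∈ ({θ, σ} : Set (Equiv.Perm F)) := by simp
  have hσS : σ ∈ ({θ, σ} : Set (Equiv.Perm F)) := by simp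
  refine (Set.eq_of_subset_of_ncard_le ?_ ?_ (Set.toFinite _)).symm
  · rintro w (rfl | rfl | rfl | rfl)
    exacts [hy, apply_mem_orbSet hθS hy, apply_mem_orbSet hσS hy,
      apply_mem_orbSet hσS (apply_mem_orbSet hθS hy)]
  · rw [ncard_quad_eq_four h.1 h.2.1 (h.theta_ne_sigma y), ← Nat.card_coe_set_eq, h.2.2.2 y]

lemma IsGraphEmb.sigma_theta_comm [Finite F] (h : IsGraphEmb θ σ φ) (y : F) :
    σ (θ y) = θ (σ y) := by
  have hmem : θ (σ y) ∈ orbSet {θ, σ} y :=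
    apply_mem_orbSet (by simp) (apply_mem_orbSet (by simp) (mem_orbSet_self _ _))
  have hθi := h.1.involutive
  have hθx := h.1.2
  have hσx := h.2.1.2
  have hθσ := h.theta_ne_sigma y
  rw [h.edge_eq y] at hmem
  simp only [Set.mem_insert_iff, Set.mem_singleton_iff] at hmem
  grind [Function.Involutive]

lemma IsNice.face_eq_or_exists_labelled [Finite F] (hn : IsNice θ σ φ L)
    (h : IsGraphEmb θ σ φ) (y : F) :
    orbSet {θ, φ} (σ y) = orbSet {θ, φ} y ∨
      ∃ z ∈ orbSet {θ, φ} y, z ∉ ({y, θ y, φ y, φ (θ y)} : Set F) ∧ L z ≠ none := by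
  refine or_iff_not_imp_left.mpr fun hne => hn.2 y ?_
  have hθ : ∀ x, orbSet {θ, φ} (θ x) = orbSet {θ, φ} x := fun x =>
    orbSet_eq_of_mem (apply_mem_orbSet (by simp) (mem_orbSet_self _ _))
  rw [h.edge_eq, Nat.card_coe_set_eq, h.sigma_theta_comm]
  simp only [Set.image_insert_eq, Set.image_singleton, hθ, Set.insert_idem,
    Set.pair_eq_singleton]
  exact Set.ncard_pair (Ne.symm hne)

lemma vertex_subset_face_or_sigma_eq [Finite F] (h : IsGraphEmb θ σ φ)
    (hL : IsLabelling σ φ L) (hn : IsNice θ σ φ L) {z : F} (hz : L z ≠ none)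
    (hlab : ∀ w ∈ orbSet {θ, φ} z, L w ≠ none → w ∈ ({z, θ z, φ z, φ (θ z)} : Set F)) :
    orbSet {σ, φ} z ⊆ orbSet {θ, φ} z ∨ σ z = φ (θ z) := by
  rcases hn.face_eq_or_exists_labelled h z with hmono | ⟨w, hw, hwN, hwL⟩
  · have hσz : σ z ∈ ({z, θ z, φ z, φ (θ z)} : Set F) :=
      hlab _ (hmono ▸ mem_orbSet_self _ _) (by rwa [hL.label_apply_left])
    rcases hσz with h1 | h1 | h1 | h1
    · exact absurd h1 (h.2.1.2 z)
    · exact absurd h1.symm (h.theta_ne_sigma z)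
    · left
      refine (orbSet_pair_subset_of_apply_eq h.2.1.involutive h.2.2.1.involutive h1).trans ?_
      rintro w (rfl | rfl)
      exacts [mem_orbSet_self _ _, h1 ▸ apply_mem_orbSet (by simp) (mem_orbSet_self _ _)]
    · exact Or.inr h1
  · exact absurd (hlab w hw hwL) hwN

lemma exists_vertex_subset_face_of_ncard_labelled_eq_two [Finite F] (h : IsGraphEmb θ σ φ)
    (hL : IsLabelling σ φ L) (hn : IsNice θ σ φ L) {y : F}
    (hb : ({x | L x ≠ none} ∩ orbSet {θ, φ} y).ncard = 2) :
    ∃ z, L z ≠ none ∧ orbSet {σ, φ} z ⊆ orbSet {θ, φ} y := by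
  obtain ⟨z, hzL, hzy⟩ := Set.nonempty_of_ncard_ne_zero (hb ▸ two_ne_zero)
  rw [← orbSet_eq_of_mem hzy] at hb ⊢
  have hz := mem_orbSet_self {θ, φ} z
  have hφz : φ z ∈ orbSet {θ, φ} z := apply_mem_orbSet (by simp) hz
  have hpair : {x | L x ≠ none} ∩ orbSet {θ, φ} z = {z, φ z} := by
    refine (Set.eq_of_subset_of_ncard_le ?_ ?_ (Set.toFinite _)).symm
    · rintro w (rfl | rfl)
      exacts [⟨hzL, hz⟩, ⟨(hL.label_apply_right z ▸ hzL : L (φ z) ≠ none), hφz⟩]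
    · rw [hb, Set.ncard_pair (h.2.2.1.2 z).symm]
  have hlab : ∀ w ∈ orbSet {θ, φ} z, L w ≠ none → w ∈ ({z, θ z, φ z, φ (θ z)} : Set F) := by
    intro w hw hwL
    obtain rfl | rfl : w ∈ ({z, φ z} : Set F) := hpair ▸ ⟨hwL, hw⟩ <;> simp
  refine (vertex_subset_face_or_sigma_eq h hL hn hzL hlab).elim
    (fun hsub => ⟨z, hzL, hsub⟩) fun hσz => ?_
  have hσz_mem : σ z ∈ ({z, φ z} : Set F) := hpair ▸
    ⟨(hL.label_apply_left z ▸ hzL : L (σ z) ≠ none),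
      hσz ▸ apply_mem_orbSet (by simp) (apply_mem_orbSet (by simp) hz)⟩
  rcases hσz_mem with h1 | h1
  · exact absurd h1 (h.2.1.2 z)
  · exact absurd (φ.injective (hσz ▸ h1 : φ (θ z) = φ z)) (h.1.2 z)

lemma exists_vertex_subset_face_of_ncard_eq_six [Finite F] (h : IsGraphEmb θ σ φ)
    (hL : IsLabelling σ φ L) (hn : IsNice θ σ φ L) {y : F}
    (ha : (orbSet {θ, φ} y).ncard = 6)
    (hb : ({x | L x ≠ none} ∩ orbSet {θ, φ} y).ncard = 4) :
    ∃ z, L z ≠ none ∧ orbSet {σ, φ} z ⊆ orbSet {θ, φ} y := by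
  obtain ⟨u, huy, hu⟩ :
      (orbSet {θ, φ} y \ ({x | L x ≠ none} ∩ orbSet {θ, φ} y)).Nonempty := by
    refine Set.nonempty_of_ncard_ne_zero ?_
    rw [Set.ncard_sdiff Set.inter_subset_right (Set.toFinite _), ha, hb]
    decide
  have huL : L u = none := not_not.mp fun hc => hu ⟨hc, huy⟩
  rw [← orbSet_eq_of_mem huy] at ha hb ⊢
  obtain ⟨hO6, hclose⟩ := orbSet_eq_hexagon h.1 h.2.2.1 ha
  set p := φ (θ u)
  -- The labelled flags are the four flags around the edge side `{p, θ p}`, so niceness at `p`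
  -- leaves only `σ p = φ p` (a labelled vertex inside the face) or `σ p = φ (θ p)`; the latter
  -- makes `σ (θ p) = θ (φ (θ p)) = φ u` unlabelled.
  have hpO : p ∈ orbSet {θ, φ} u := by rw [hO6]; simp
  have hlabO : {x | L x ≠ none} ∩ orbSet {θ, φ} u = {θ u, p, θ p, φ (θ p)} := by
    refine Set.eq_of_subset_of_ncard_le ?_ (hb ▸ ncard_quad_le_four _ _ _ _) (Set.toFinite _)
    rintro w ⟨hwL, hw⟩
    rw [hO6] at hw
    rcases hw with rfl | rfl | hw
    · exact absurd huL hwL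
    · exact absurd (hL.label_apply_right u ▸ huL) hwL
    · exact hw
  have hlab : ∀ w ∈ orbSet {θ, φ} p, L w ≠ none → w ∈ ({p, θ p, φ p, φ (θ p)} : Set F) := by
    intro w hw hwL
    rw [orbSet_eq_of_mem hpO] at hw
    have : w ∈ ({θ u, p, θ p, φ (θ p)} : Set F) := hlabO ▸ ⟨hwL, hw⟩
    rcases this with rfl | rfl | rfl | rfl
    · simp [p, h.2.2.1.involutive _]
    all_goals simp
  have hlabel : ∀ x ∈ ({θ u, p, θ p, φ (θ p)} : Set F), L x ≠ none := fun x hx =>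
    (hlabO.symm ▸ hx : x ∈ {x | L x ≠ none} ∩ orbSet {θ, φ} u).1
  have hpL : L p ≠ none := hlabel p (by simp)
  rcases vertex_subset_face_or_sigma_eq h hL hn hpL hlab with hsub | hσp
  · exact ⟨p, hpL, orbSet_eq_of_mem hpO ▸ hsub⟩
  · have hσθp : L (σ (θ p)) = none := by
      rw [h.sigma_theta_comm, hσp, hclose, hL.label_apply_right, huL]
    exact absurd (hL.label_apply_left _ ▸ hσθp) (hlabel (θ p) (by simp))

-- For a labelling, the nonempty classes `L⁻¹ {some ℓ}` are exactly the labelled vertices.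
def ContainsLabelClass {ι : Type*} (L : F → Option ι) (O : Set F) : Prop :=
  ∃ ℓ, (∃ x, L x = some ℓ) ∧ ∀ x, L x = some ℓ → x ∈ O

lemma IsLabelling.containsLabelClass (hL : IsLabelling σ φ L) {z : F} (hz : L z ≠ none)
    {O : Set F} (hO : orbSet {σ, φ} z ⊆ O) : ContainsLabelClass L O := by
  obtain ⟨ℓ, hℓ⟩ := Option.ne_none_iff_exists'.mp hz
  exact ⟨ℓ, ⟨z, hℓ⟩, fun x hx => hO (hL.2 z x ℓ hℓ hx)⟩

lemma twentyfour_le_ncard_add_four_mul_ncard_labelled [Finite F] (h : IsGraphEmb θ σ φ)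
    (hL : IsLabelling σ φ L) (hn : IsNice θ σ φ L) {x : F} (hx : orbSet {θ, φ} (σ x) ≠ orbSet {θ, φ} x)
    (hO : ¬ ContainsLabelClass L (orbSet {θ, φ} x)) :
    24 ≤ (orbSet {θ, φ} x).ncard + 4 * ({z | L z ≠ none} ∩ orbSet {θ, φ} x).ncard := by
  obtain ⟨z, hz, hzN, hzL⟩ := (hn.face_eq_or_exists_labelled h x).resolve_left hx
  have ha5 := five_le_ncard_orbSet h.1 h.2.2.1 hz hzN
  obtain ⟨m, hm⟩ : Even (orbSet {θ, φ} x).ncard :=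
    even_ncard_of_forall_mem h.1 fun w hw => apply_mem_orbSet (by simp) hw
  obtain ⟨k, hk⟩ : Even ({z | L z ≠ none} ∩ orbSet {θ, φ} x).ncard :=
    even_ncard_of_forall_mem h.2.2.1 fun w ⟨hwL, hw⟩ =>
      ⟨(hL.label_apply_right w ▸ hwL : L (φ w) ≠ none), apply_mem_orbSet (by simp) hw⟩
  have hb0 : ({z | L z ≠ none} ∩ orbSet {θ, φ} x).ncard ≠ 0 :=
    Set.ncard_ne_zero_of_mem ⟨hzL, hz⟩ (Set.toFinite _)
  have hba := Set.ncard_le_ncard (Set.inter_subset_right (s := {z | L z ≠ none})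
    (t := orbSet {θ, φ} x)) (Set.toFinite _)
  have hb2 : ({z | L z ≠ none} ∩ orbSet {θ, φ} x).ncard ≠ 2 := fun hb => by
    obtain ⟨w, hwL, hw⟩ := exists_vertex_subset_face_of_ncard_labelled_eq_two h hL hn hb
    exact hO (hL.containsLabelClass hwL hw)
  have h64 : (orbSet {θ, φ} x).ncard = 6 → ({z | L z ≠ none} ∩ orbSet {θ, φ} x).ncard ≠ 4 :=
    fun ha hb => by
      obtain ⟨w, hwL, hw⟩ := exists_vertex_subset_face_of_ncard_eq_six h hL hn ha hb
      exact hO (hL.containsLabelClass hwL hw)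
  omega

end Embedding

section Counting

variable [Fintype F]

noncomputable def orbits (S : Set (Equiv.Perm F)) : Finset (Set F) := by
  classical exact Finset.univ.image (orbSet S)

lemma mem_orbits {S : Set (Equiv.Perm F)} {O : Set F} : O ∈ orbits S ↔ ∃ x, orbSet S x = O := by
  simp [orbits]

lemma eq_of_mem_orbits {S : Set (Equiv.Perm F)} {O O' : Set F} (hO : O ∈ orbits S)
    (hO' : O' ∈ orbits S) {x : F} (hx : x ∈ O) (hx' : x ∈ O') : O = O' := by
  obtain ⟨y, rfl⟩ := mem_orbits.mp hO
  obtain ⟨y', rfl⟩ := mem_orbits.mp hO'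
  rw [← orbSet_eq_of_mem hx, ← orbSet_eq_of_mem hx']

lemma orbCount_eq_card_orbits (S : Set (Equiv.Perm F)) : orbCount S = #(orbits S) := by
  classical
  have hrange : Set.range (MulAction.orbitRel.Quotient.orbit (G := Subgroup.closure S) (α := F))
      = ↑(orbits S) := by
    rw [← Quotient.mk''_surjective.range_comp]
    ext O
    simp [orbits, orbSet]
  rw [orbCount, ← Nat.card_range_of_injective MulAction.orbitRel.Quotient.orbit_injective, hrange,
    Nat.card_coe_set_eq, Set.ncard_coe_finset]

lemma sum_ncard_inter_orbits (S : Set (Equiv.Perm F)) (T : Set F) :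
    ∑ O ∈ orbits S, (T ∩ O).ncard = T.ncard := by
  classical
  rw [Set.ncard_eq_toFinset_card' T, card_eq_sum_card_fiberwise (f := orbSet S) (t := orbits S)
    fun x _ => mem_orbits.mpr ⟨x, rfl⟩]
  refine sum_congr rfl fun O hO => ?_
  rw [Set.ncard_eq_toFinset_card']
  congr 1
  ext x
  simp only [Set.mem_toFinset, mem_filter, Set.mem_inter_iff]
  exact and_congr_right fun _ => ⟨fun hx => eq_of_mem_orbits (mem_orbits.mpr ⟨x, rfl⟩) hO
    (mem_orbSet_self S x) hx, fun hx => hx ▸ mem_orbSet_self S x⟩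

lemma card_filter_containsLabelClass_le {ι : Type*} [Fintype ι] (S : Set (Equiv.Perm F))
    (L : F → Option ι) [DecidablePred (ContainsLabelClass L)] :
    #((orbits S).filter (ContainsLabelClass L)) ≤ Fintype.card ι := by
  refine card_le_card_of_forall_subsingleton
    (fun O ℓ => (∃ x, L x = some ℓ) ∧ ∀ x, L x = some ℓ → x ∈ O) ?_ ?_
  · intro O hO
    obtain ⟨ℓ, hℓ⟩ := (mem_filter.mp hO).2
    exact ⟨ℓ, mem_univ ℓ, hℓ⟩
  · rintro ℓ - O ⟨hO, ⟨x, hx⟩, hOℓ⟩ O' ⟨hO', -, hO'ℓ⟩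
    exact eq_of_mem_orbits (mem_filter.mp hO).1 (mem_filter.mp hO').1 (hOℓ x hx) (hO'ℓ x hx)

end Counting

section Bounds

variable [Fintype F] {t : ℕ} {θ σ φ : Equiv.Perm F} {L : F → Option (Fin t)}

lemma card_eq_four_mul_orbCount (h : IsGraphEmb θ σ φ) : Fintype.card F = 4 * orbCount {θ, σ} := by
  have hsum := sum_ncard_inter_orbits {θ, σ} Set.univ
  rw [Set.ncard_univ, Nat.card_eq_fintype_card] at hsum
  rw [← hsum, orbCount_eq_card_orbits, mul_comm, ← smul_eq_mul, ← sum_const]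
  refine sum_congr rfl fun O hO => ?_
  obtain ⟨x, rfl⟩ := mem_orbits.mp hO
  rw [Set.univ_inter, ← Nat.card_coe_set_eq, h.2.2.2 x]

lemma vertex_count_le (hL : IsLabelling σ φ L) (hn : IsNice θ σ φ L) :
    6 * orbCount {σ, φ} ≤ 6 * t + 6 * orbCount {θ, σ, φ} + {x | L x = none}.ncard := by
  classical
  have key := mul_card_le_add_sum (orbits {σ, φ}) (ContainsLabelClass L) (· ∈ orbits {θ, σ, φ})
    (fun O => ({x | L x = none} ∩ O).ncard) 6 ?_
  · have hlab := card_filter_containsLabelClass_le {σ, φ} L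
    have hcomp : #((orbits {σ, φ}).filter (· ∈ orbits {θ, σ, φ})) ≤ #(orbits {θ, σ, φ}) :=
      card_le_card fun O hO => (mem_filter.mp hO).2
    rw [sum_ncard_inter_orbits] at key
    rw [Fintype.card_fin] at hlab
    rw [orbCount_eq_card_orbits, orbCount_eq_card_orbits]
    omega
  rintro O hO hlab hcomp
  obtain ⟨x, rfl⟩ := mem_orbits.mp hO
  have hxL : L x = none := not_not.mp fun hx => hlab (hL.containsLabelClass hx subset_rfl)
  have h6 : 6 ≤ (orbSet {σ, φ} x).ncard := by
    by_contra! hlt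
    exact hcomp (hn.1 x hxL (by rwa [Nat.card_coe_set_eq]) ▸ mem_orbits.mpr ⟨x, rfl⟩)
  have hunl : {x | L x = none} ∩ orbSet {σ, φ} x = orbSet {σ, φ} x :=
    Set.inter_eq_right.mpr fun w hw => (hL.1 x w hw).trans hxL
  rwa [hunl]

lemma face_count_le (h : IsGraphEmb θ σ φ) (hL : IsLabelling σ φ L) (hn : IsNice θ σ φ L) :
    24 * orbCount {θ, φ} ≤
      24 * t + 24 * orbCount {θ, σ, φ} + Fintype.card F + 4 * {x | L x ≠ none}.ncard := by
  classical
  have key := mul_card_le_add_sum (orbits {θ, φ}) (ContainsLabelClass L) (· ∈ orbits {θ, σ, φ})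
    (fun O => O.ncard + 4 * ({x | L x ≠ none} ∩ O).ncard) 24 ?_
  · have hlab := card_filter_containsLabelClass_le {θ, φ} L
    have hcomp : #((orbits {θ, φ}).filter (· ∈ orbits {θ, σ, φ})) ≤ #(orbits {θ, σ, φ}) :=
      card_le_card fun O hO => (mem_filter.mp hO).2
    have hall := sum_ncard_inter_orbits {θ, φ} Set.univ
    simp only [Set.univ_inter, Set.ncard_univ, Nat.card_eq_fintype_card] at hall
    rw [sum_add_distrib, ← mul_sum, sum_ncard_inter_orbits, hall] at key
    rw [Fintype.card_fin] at hlab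
    rw [orbCount_eq_card_orbits, orbCount_eq_card_orbits]
    omega
  rintro O hO hlab hcomp
  obtain ⟨x, rfl⟩ := mem_orbits.mp hO
  obtain ⟨w, hw, hσw⟩ : ∃ w ∈ orbSet {θ, φ} x, σ w ∉ orbSet {θ, φ} x := by
    by_contra! hclosed
    refine hcomp (mem_orbits.mpr ⟨x, ?_⟩)
    rw [Set.insert_comm, orbSet_insert_eq_of_forall_mem hclosed]
  rw [← orbSet_eq_of_mem hw] at hlab ⊢
  refine twentyfour_le_ncard_add_four_mul_ncard_labelled h hL hn (fun he => hσw ?_) hlab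
  rw [← orbSet_eq_of_mem hw, ← he]
  exact mem_orbSet_self _ _

end Bounds

end Development

theorem stmt12 {F : Type*} [Fintype F] {t : ℕ}
    (θ σ' φ' : Equiv.Perm F) (h : IsGraphEmb θ σ' φ')
    (L : F → Option (Fin t)) (hL : IsLabelling σ' φ' L)
    (hnice : IsNice θ σ' φ' L) :
    (Fintype.card F : ℤ) ≤ 48 * t + 24 * genus θ σ' φ' ∧
    (orbCount {θ, σ'} : ℤ) ≤ 12 * t + 6 * genus θ σ' φ' := by
  have hE := card_eq_four_mul_orbCount h
  have hV := vertex_count_le hL hnice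
  have hF := face_count_le h hL hnice
  have hflags : {x | L x = none}.ncard + {x | L x ≠ none}.ncard = Fintype.card F :=
    (Set.ncard_add_ncard_compl _).trans Nat.card_eq_fintype_card
  unfold genus
  omega
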